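/- arXiv:2505.00594 — 3 statements merged into one kernel-verified Lean document; each statement's English description precedes it below -/
import Mathlib

section
/- Let ⋏ be a binary operation on a finite set X that is idempotent, commutative, associative, and satisfies |{x⋏y, x⋏z, y⋏z}| ≤ 2 for all x,y,z ∈ X. Then the relation x ⪯ y defined by x⋏y = x is a partial order on X in which for every element v, the down-set {x : x ⪯ v} is a chain (i.e., totally ordered). -/
/-! If `x, y ⪯ v` then `x ⋏ v = x` and `y ⋏ v = y`, so the
triple `{x ⋏ y, x ⋏ v, y ⋏ v}` is `{x ⋏ y, x, y}`; having at most two elements, it forces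
`x ⋏ y = x`, `x ⋏ y = y` or `x = y`, and each case makes `x` and `y` comparable. -/

theorem Finset.eq_or_eq_or_eq_of_card_triple_le_two {α : Type*} [DecidableEq α] {a b c : α}
    (h : ({a, b, c} : Finset α).card ≤ 2) : a = b ∨ a = c ∨ b = c := by
  by_contra! hne
  obtain ⟨hab, hac, hbc⟩ := hne
  have : ({a, b, c} : Finset α).card = 3 := Finset.card_eq_three.mpr ⟨a, b, c, hab, hac, hbc, rfl⟩
  omega

section MeetOrder

variable {X : Type*} {m : X → X → X}

theorem meet_antisymm (hcomm : ∀ x y, m x y = m y x) {x y : X}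
    (hxy : m x y = x) (hyx : m y x = y) : x = y := by
  rw [← hxy, hcomm, hyx]

theorem meet_trans (hassoc : ∀ x y z, m (m x y) z = m x (m y z)) {x y z : X}
    (hxy : m x y = x) (hyz : m y z = y) : m x z = x :=
  calc m x z = m (m x y) z := by rw [hxy]
    _ = m x (m y z) := hassoc x y z
    _ = x := by rw [hyz, hxy]

theorem meet_comparable_of_le_common [DecidableEq X] (hidem : ∀ x, m x x = x)
    (hcomm : ∀ x y, m x y = m y x)
    (h3 : ∀ x y z : X, ({m x y, m x z, m y z} : Finset X).card ≤ 2) {v x y : X}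
    (hx : m x v = x) (hy : m y v = y) : m x y = x ∨ m y x = y := by
  have hcard := h3 x y v
  rw [hx, hy] at hcard
  rcases Finset.eq_or_eq_or_eq_of_card_triple_le_two hcard with h | h | rfl
  · exact Or.inl h
  · exact Or.inr (by rw [hcomm, h])
  · exact Or.inl (hidem x)

end MeetOrder

theorem semilattice_tree_order_general {X : Type*} [DecidableEq X]
    (m : X → X → X)
    (hidem : ∀ x, m x x = x)
    (hcomm : ∀ x y, m x y = m y x)
    (hassoc : ∀ x y z, m (m x y) z = m x (m y z))
    (h3 : ∀ x y z : X, ({m x y, m x z, m y z} : Finset X).card ≤ 2) :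
    (∀ x : X, m x x = x) ∧
    (∀ x y : X, m x y = x → m y x = y → x = y) ∧
    (∀ x y z : X, m x y = x → m y z = y → m x z = x) ∧
    (∀ v x y : X, m x v = x → m y v = y → (m x y = x ∨ m y x = y)) :=
  ⟨hidem, fun _ _ => meet_antisymm hcomm, fun _ _ _ => meet_trans hassoc,
    fun _ _ _ => meet_comparable_of_le_common hidem hcomm h3⟩

/-- a finite meet-semilattice operation `m` satisfying the extra
"tree" condition `|{x⋏y, x⋏z, y⋏z}| ≤ 2` induces (via `x ⪯ y ↔ x⋏y = x`) a
partial order all of whose principal down-sets are chains. -/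
theorem semilattice_tree_order {X : Type*} [Fintype X] [DecidableEq X]
    (m : X → X → X)
    (hidem : ∀ x, m x x = x)
    (hcomm : ∀ x y, m x y = m y x)
    (hassoc : ∀ x y z, m (m x y) z = m x (m y z))
    (h3 : ∀ x y z : X, ({m x y, m x z, m y z} : Finset X).card ≤ 2) :
    (∀ x : X, m x x = x) ∧
    (∀ x y : X, m x y = x → m y x = y → x = y) ∧
    (∀ x y z : X, m x y = x → m y z = y → m x z = x) ∧
    (∀ v x y : X, m x v = x → m y v = y → (m x y = x ∨ m y x = y)) :=
  semilattice_tree_order_general m hidem hcomm hassoc h3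
end

section
/- Every cograph on at least two vertices is either disconnected or its complement is disconnected. -/
section Aux

variable {V : Type*}

/-- The P4 pattern as a predicate. -/
def IsP4' (G : SimpleGraph V) (a b c d : V) : Prop :=
  a ≠ b ∧ a ≠ c ∧ a ≠ d ∧ b ≠ c ∧ b ≠ d ∧ c ≠ d ∧
  G.Adj a b ∧ G.Adj b c ∧ G.Adj c d ∧ ¬ G.Adj a c ∧ ¬ G.Adj b d ∧ ¬ G.Adj a d

/-- Reachability inside a finset of vertices. -/
inductive ReachIn (G : SimpleGraph V) (s : Finset V) : V → V → Prop
  | refl {x : V} (hx : x ∈ s) : ReachIn G s x x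
  | tail {x y z : V} (h : ReachIn G s x y) (hadj : G.Adj y z) (hz : z ∈ s) : ReachIn G s x z

namespace ReachIn

lemma mem_left {G : SimpleGraph V} {s : Finset V} {x y : V} (h : ReachIn G s x y) : x ∈ s := by
  induction h with
  | refl hx => exact hx
  | tail _ _ _ ih => exact ih

lemma mem_right {G : SimpleGraph V} {s : Finset V} {x y : V} (h : ReachIn G s x y) : y ∈ s := by
  induction h with
  | refl hx => exact hx
  | tail _ _ hz _ => exact hz

lemma trans' {G : SimpleGraph V} {s : Finset V} {x y z : V} (h2 : ReachIn G s y z) :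
    ReachIn G s x y → ReachIn G s x z := by
  induction h2 with
  | refl _ => exact id
  | tail _ hadj hz ih => exact fun h1 => (ih h1).tail hadj hz

lemma trans {G : SimpleGraph V} {s : Finset V} {x y z : V} (h1 : ReachIn G s x y)
    (h2 : ReachIn G s y z) : ReachIn G s x z := h2.trans' h1

lemma single {G : SimpleGraph V} {s : Finset V} {x y : V} (hx : x ∈ s) (hy : y ∈ s)
    (h : G.Adj x y) : ReachIn G s x y :=
  (refl hx).tail h hy

lemma symm {G : SimpleGraph V} {s : Finset V} {x y : V} (h : ReachIn G s x y) :
    ReachIn G s y x := by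
  induction h with
  | refl hx => exact refl hx
  | tail h hadj hz ih => exact (single hz h.mem_right hadj.symm).trans ih

/-- Inversion at the head. -/
lemma head_cases {G : SimpleGraph V} {s : Finset V} {x y : V} (h : ReachIn G s x y) :
    x = y ∨ ∃ z ∈ s, G.Adj x z := by
  induction h with
  | refl _ => exact Or.inl rfl
  | tail h hadj hz ih =>
    rcases ih with rfl | h'
    · exact Or.inr ⟨_, hz, hadj⟩
    · exact Or.inr h'

/-- A walk inside `s` starting in `s.erase v` either avoids `v`, or at least
reaches some `G`-neighbour of `v` while avoiding `v`. -/
lemma attach [DecidableEq V] {G : SimpleGraph V} {s : Finset V} {v x w : V}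
    (h : ReachIn G s x w) : x ∈ s.erase v →
    (w ≠ v ∧ ReachIn G (s.erase v) x w) ∨
      ∃ y ∈ s.erase v, G.Adj v y ∧ ReachIn G (s.erase v) x y := by
  induction h with
  | refl _ => exact fun hx => Or.inl ⟨(Finset.mem_erase.mp hx).1, refl hx⟩
  | @tail y z h hadj hz ih =>
    intro hx
    rcases ih hx with ⟨hyv, hr⟩ | hr
    · by_cases hzv : z = v
      · subst hzv
        exact Or.inr ⟨_, hr.mem_right, hadj.symm, hr⟩
      · exact Or.inl ⟨hzv, hr.tail hadj (Finset.mem_erase.mpr ⟨hzv, hz⟩)⟩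
    · exact Or.inr hr

/-- Along a walk from a neighbour of `v` to a non-neighbour of `v`, adjacency to `v` flips
across some edge. -/
lemma flip {G : SimpleGraph V} {s' : Finset V} {v a b : V}
    (h : ReachIn G s' a b) (hva : G.Adj v a) : ¬ G.Adj v b →
    ∃ x' ∈ s', ∃ y' ∈ s', G.Adj v x' ∧ ¬ G.Adj v y' ∧ G.Adj x' y' ∧ ReachIn G s' a x' := by
  induction h with
  | refl _ => exact fun hvb => absurd hva hvb
  | @tail y z h hadj hz ih =>
    intro hvb
    by_cases hvy : G.Adj v y
    · exact ⟨y, h.mem_right, z, hz, hvy, hvb, hadj, h⟩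
    · exact ih hvy

/-- Reachability in a pair forces an edge. -/
lemma reach_pair [DecidableEq V] {G : SimpleGraph V} {a b x w : V} (h : ReachIn G ({a, b} : Finset V) x w) (hx : x = a) :
    w = a ∨ G.Adj a b := by
  induction h with
  | refl _ => exact Or.inl hx
  | tail h hadj hz ih =>
    rcases ih with rfl | hab
    · subst hx
      rcases Finset.mem_insert.mp hz with rfl | hz'
      · exact absurd hadj G.irrefl
      · have := Finset.mem_singleton.mp hz'
        subst this
        exact Or.inr hadj
    · exact Or.inr hab

end ReachIn

lemma isP4'_compl {G : SimpleGraph V} {a b c d : V} (h : IsP4' Gᶜ a b c d) : IsP4' G c a d b := by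
  obtain ⟨hab, hac, had, hbc, hbd, hcd, eab, ebc, ecd, nac, nbd, nad⟩ := h
  have adj_of : ∀ x y : V, x ≠ y → ¬ Gᶜ.Adj x y → G.Adj x y := by
    intro x y hxy hc
    by_contra hg
    exact hc ⟨hxy, hg⟩
  have nab : ¬ G.Adj a b := eab.2
  have nbc : ¬ G.Adj b c := ebc.2
  have ncd : ¬ G.Adj c d := ecd.2
  exact ⟨hac.symm, hcd, hbc.symm, had, hab, hbd.symm,
    (adj_of a c hac nac).symm, adj_of a d had nad, (adj_of b d hbd nbd).symm,
    ncd, nab, fun h => nbc h.symm⟩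

/-- Key step: if `G` and `Gᶜ` are connected on `s`, but `G` is disconnected on `s.erase v`,
then `G` contains an induced `P4`. -/
lemma stepA [DecidableEq V] (G : SimpleGraph V) (s : Finset V) (v : V) (hv : v ∈ s)
    (hG : ∀ x ∈ s, ∀ y ∈ s, ReachIn G s x y)
    (hGc : ∀ x ∈ s, ∀ y ∈ s, ReachIn Gᶜ s x y)
    (hnc : ¬ ∀ x ∈ s.erase v, ∀ y ∈ s.erase v, ReachIn G (s.erase v) x y) :
    ∃ a b c d, IsP4' G a b c d := by
  push_neg at hnc
  obtain ⟨p, hp, q, hq, hpq⟩ := hnc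
  set s' := s.erase v with hs'
  have hps : p ∈ s := Finset.mem_of_mem_erase hp
  have hqs : q ∈ s := Finset.mem_of_mem_erase hq
  have attach' : ∀ x ∈ s', ∃ y ∈ s', G.Adj v y ∧ ReachIn G s' x y := by
    intro x hx
    have hxv : ReachIn G s x v := hG x (Finset.mem_of_mem_erase hx) v hv
    rcases hxv.attach hx with ⟨hne, _⟩ | h
    · exact absurd rfl hne
    · exact h
  by_cases huniv : ∀ u ∈ s', G.Adj v u
  · exfalso
    have h1 : ReachIn Gᶜ s v p := hGc v hv p hps
    rcases h1.head_cases with rfl | ⟨z, hzs, hvz⟩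
    · exact (Finset.mem_erase.mp hp).1 rfl
    · have hz' : z ∈ s' := Finset.mem_erase.mpr ⟨hvz.ne', hzs⟩
      exact hvz.2 (huniv z hz')
  · push_neg at huniv
    obtain ⟨u, hu, hvu⟩ := huniv
    obtain ⟨yu, hyu, hvyu, hru⟩ := attach' u hu
    obtain ⟨x', hx', y', hy', hvx', hvy', hxy', hrx'⟩ := hru.symm.flip hvyu hvu
    obtain ⟨yp, hyp, hvyp, hrp⟩ := attach' p hp
    obtain ⟨yq, hyq, hvyq, hrq⟩ := attach' q hq
    have hnotboth : ¬ (ReachIn G s' yp x' ∧ ReachIn G s' yq x') := by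
      rintro ⟨h1, h2⟩
      exact hpq (hrp.trans (h1.trans (h2.symm.trans hrq.symm)))
    obtain ⟨y, hy, hvy, hyx⟩ : ∃ y ∈ s', G.Adj v y ∧ ¬ ReachIn G s' y x' := by
      by_cases h1 : ReachIn G s' yp x'
      · exact ⟨yq, hyq, hvyq, fun h2 => hnotboth ⟨h1, h2⟩⟩
      · exact ⟨yp, hyp, hvyp, h1⟩
    have hyy' : ¬ ReachIn G s' y y' := fun h =>
      hyx (h.trans (ReachIn.single hy' hx' hxy'.symm))
    have hyne : y ≠ v := (Finset.mem_erase.mp hy).1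
    have hx'v : x' ≠ v := (Finset.mem_erase.mp hx').1
    have hy'v : y' ≠ v := (Finset.mem_erase.mp hy').1
    have hyx'ne : y ≠ x' := fun h => hyx (h ▸ ReachIn.refl hy)
    have hyy'ne : y ≠ y' := fun h => hyy' (h ▸ ReachIn.refl hy)
    refine ⟨y, v, x', y', hyne, hyx'ne, hyy'ne, fun h => hx'v h.symm, fun h => hy'v h.symm,
      hxy'.ne, hvy.symm, hvx', hxy', ?_, hvy', ?_⟩
    · exact fun h => hyx (ReachIn.single hy hx' h)
    · exact fun h => hyy' (ReachIn.single hy hy' h)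

lemma key [DecidableEq V] (G : SimpleGraph V) (n : ℕ) : ∀ s : Finset V, s.card = n → 2 ≤ n →
    (∀ x ∈ s, ∀ y ∈ s, ReachIn G s x y) → (∀ x ∈ s, ∀ y ∈ s, ReachIn Gᶜ s x y) →
    ∃ a b c d, IsP4' G a b c d := by
  induction n using Nat.strong_induction_on with
  | _ n ih =>
    intro s hcard hn hG hGc
    rcases eq_or_lt_of_le hn with h2 | h3
    · exfalso
      obtain ⟨a, b, hab, hs⟩ := Finset.card_eq_two.mp (hcard.trans h2.symm)
      subst hs
      have ha : a ∈ ({a, b} : Finset V) := by simp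
      have hb : b ∈ ({a, b} : Finset V) := by simp
      rcases (hG a ha b hb).reach_pair rfl with h | hadj
      · exact hab h.symm
      · rcases (hGc a ha b hb).reach_pair rfl with h | hadj'
        · exact hab h.symm
        · exact hadj'.2 hadj
    · obtain ⟨v, hv⟩ := Finset.card_pos.mp (show 0 < s.card by omega)
      have hcard' : (s.erase v).card = n - 1 := by
        rw [Finset.card_erase_of_mem hv, hcard]
      by_cases hc1 : ∀ x ∈ s.erase v, ∀ y ∈ s.erase v, ReachIn G (s.erase v) x y
      · by_cases hc2 : ∀ x ∈ s.erase v, ∀ y ∈ s.erase v, ReachIn Gᶜ (s.erase v) x y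
        · exact ih (n - 1) (by omega) (s.erase v) hcard' (by omega) hc1 hc2
        · have hGcc : ∀ x ∈ s, ∀ y ∈ s, ReachIn Gᶜᶜ s x y := by
            simpa [compl_compl] using hG
          obtain ⟨a, b, c, d, h⟩ := stepA Gᶜ s v hv hGc hGcc hc2
          exact ⟨c, a, d, b, isP4'_compl h⟩
      · exact stepA G s v hv hG hGc hc1

lemma walk_reachIn [Fintype V] {G : SimpleGraph V} {x y : V} (w : G.Walk x y) :
    ReachIn G Finset.univ x y := by
  induction w with
  | nil => exact ReachIn.refl (Finset.mem_univ _)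
  | cons hadj p ih =>
    exact (ReachIn.single (Finset.mem_univ _) (Finset.mem_univ _) hadj).trans ih

end Aux

/-- A graph is `P4`-free: no induced path on four vertices. -/
def P4Free {V : Type*} (G : SimpleGraph V) : Prop :=
  ¬ ∃ a b c d : V, a ≠ b ∧ a ≠ c ∧ a ≠ d ∧ b ≠ c ∧ b ≠ d ∧ c ≠ d ∧
    G.Adj a b ∧ G.Adj b c ∧ G.Adj c d ∧ ¬ G.Adj a c ∧ ¬ G.Adj b d ∧ ¬ G.Adj a d

/-- every cograph (P4-free graph) on at least two vertices is
either disconnected or its complement is disconnected. -/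
theorem cograph_or_complement_disconnected {V : Type*} [Fintype V]
    (G : SimpleGraph V) (hP4 : P4Free G) (h2 : 2 ≤ Fintype.card V) :
    ¬ G.Connected ∨ ¬ Gᶜ.Connected := by
  classical
  by_contra hcon
  push_neg at hcon
  obtain ⟨hc, hcc⟩ := hcon
  have hG : ∀ x ∈ (Finset.univ : Finset V), ∀ y ∈ (Finset.univ : Finset V),
      ReachIn G Finset.univ x y := by
    intro x _ y _
    obtain ⟨w⟩ := hc.preconnected x y
    exact walk_reachIn w
  have hGc : ∀ x ∈ (Finset.univ : Finset V), ∀ y ∈ (Finset.univ : Finset V),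
      ReachIn Gᶜ Finset.univ x y := by
    intro x _ y _
    obtain ⟨w⟩ := hcc.preconnected x y
    exact walk_reachIn w
  obtain ⟨a, b, c, d, h⟩ := key G (Fintype.card V) Finset.univ (Finset.card_univ) h2 hG hGc
  exact hP4 ⟨a, b, c, d, h⟩
end

section
/- Let G be a bipartite graph with parts V1 and V2 that is a shallow ordered bicograph (sob). Then G contains no induced path on 7 vertices. -/
/-- Terms building shallow ordered bicographs (sobs): a sob is built from
single colored vertices (`false` = color 1, `true` = color 2) by disjoint
union `U`, bijoin `B` (joining all pairs of vertices of different colors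
lying in different parts), and ordered bijoin `O` (joining each color-1
vertex of the left part to each color-2 vertex of the right part). -/
inductive Sob : Type
  | leaf : Bool → Sob
  | U : Sob → Sob → Sob
  | B : Sob → Sob → Sob
  | O : Sob → Sob → Sob

namespace Sob

/-- Number of vertices. -/
def size : Sob → ℕ
  | leaf _ => 1
  | U s t => s.size + t.size
  | B s t => s.size + t.size
  | O s t => s.size + t.size

/-- Height of the build tree (a leaf has height 1). -/
def height : Sob → ℕ
  | leaf _ => 1
  | U s t => max s.height t.height + 1
  | B s t => max s.height t.height + 1
  | O s t => max s.height t.height + 1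

/-- Color of the `i`-th vertex (`false` = color 1, `true` = color 2). -/
def color : Sob → ℕ → Bool
  | leaf b, _ => b
  | U s t, i => if i < s.size then s.color i else t.color (i - s.size)
  | B s t, i => if i < s.size then s.color i else t.color (i - s.size)
  | O s t, i => if i < s.size then s.color i else t.color (i - s.size)

/-- Adjacency of the `i`-th and `j`-th vertices. -/
def adj : Sob → ℕ → ℕ → Bool
  | leaf _, _, _ => false
  | U s t, i, j =>
      if i < s.size then
        (if j < s.size then s.adj i j else false)
      else
        (if j < s.size then false else t.adj (i - s.size) (j - s.size))
  | B s t, i, j =>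
      if i < s.size then
        (if j < s.size then s.adj i j else decide (s.color i ≠ t.color (j - s.size)))
      else
        (if j < s.size then decide (t.color (i - s.size) ≠ s.color j)
         else t.adj (i - s.size) (j - s.size))
  | O s t, i, j =>
      if i < s.size then
        (if j < s.size then s.adj i j else (!s.color i) && t.color (j - s.size))
      else
        (if j < s.size then (!s.color j) && t.color (i - s.size)
         else t.adj (i - s.size) (j - s.size))

/-- The bipartite graph modeled by a sob term. -/
def graph (s : Sob) : SimpleGraph (Fin s.size) where
  Adj i j := i ≠ j ∧ (s.adj i j = true ∨ s.adj j i = true)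
  symm := by
    constructor
    rintro i j ⟨h1, h2⟩
    exact ⟨h1.symm, h2.symm⟩
  loopless := ⟨fun i h => h.1 rfl⟩

end Sob

namespace Sob

set_option maxRecDepth 100000

/-- Consecutiveness predicate for positions on the path, as a Bool. -/
def consecB (i j : Fin 7) : Bool := decide ((i:ℕ)+1 = (j:ℕ) ∨ (j:ℕ)+1 = (i:ℕ))

/-- `v` lists (indices of) the vertices of an induced `P7` in `s`. -/
def IsP7 (s : Sob) (v : Fin 7 → ℕ) : Prop :=
  (∀ i, v i < s.size) ∧ Function.Injective v ∧
  ∀ i j : Fin 7, (s.adj (v i) (v j) = true ∨ s.adj (v j) (v i) = true) ↔ consecB i j = true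

lemma adj_ne_color : ∀ (s : Sob) (i j : ℕ), s.adj i j = true → s.color i ≠ s.color j := by
  intro s
  induction s with
  | leaf b => intro i j h; simp [adj] at h
  | U a b iha ihb =>
      intro i j h
      by_cases hi : i < a.size <;> by_cases hj : j < a.size <;>
        simp only [adj, color, hi, hj, if_true, if_false, if_pos, if_neg] at h ⊢ <;>
        first
          | exact iha _ _ h
          | exact ihb _ _ h
          | simp_all
  | B a b iha ihb =>
      intro i j h
      by_cases hi : i < a.size <;> by_cases hj : j < a.size <;>
        simp only [adj, color, hi, hj, if_true, if_false, if_pos, if_neg] at h ⊢ <;>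
        first
          | exact iha _ _ h
          | exact ihb _ _ h
          | (intro hc; simp [hc] at h)
          | simp_all
  | O a b iha ihb =>
      intro i j h
      by_cases hi : i < a.size <;> by_cases hj : j < a.size <;>
        simp only [adj, color, hi, hj, if_true, if_false, if_pos, if_neg] at h ⊢ <;>
        first
          | exact iha _ _ h
          | exact ihb _ _ h
          | (simp only [Bool.and_eq_true, Bool.not_eq_true'] at h; simp [h.1, h.2])
          | simp_all

lemma adj_irrefl : ∀ (s : Sob) (i : ℕ), s.adj i i = false := by
  intro s
  induction s with
  | leaf b => intro i; simp [adj]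
  | U a b iha ihb => intro i; by_cases hi : i < a.size <;> simp [adj, hi, iha, ihb]
  | B a b iha ihb => intro i; by_cases hi : i < a.size <;> simp [adj, hi, iha, ihb]
  | O a b iha ihb => intro i; by_cases hi : i < a.size <;> simp [adj, hi, iha, ihb]

/-- Colours alternate along the induced path. -/
lemma isP7_alt {s : Sob} {v : Fin 7 → ℕ} (hv : IsP7 s v) :
    ∀ i j : Fin 7, consecB i j = true → s.color (v i) ≠ s.color (v j) := by
  intro i j hc
  rcases (hv.2.2 i j).mpr hc with h | h
  · exact adj_ne_color _ _ _ h
  · exact (adj_ne_color _ _ _ h).symm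

/-- Key combinatorial fact for `U` nodes: if no consecutive pair of the path is
split between the two parts, all vertices lie in the same part. -/
lemma keyU : ∀ L : Fin 7 → Bool,
    (∀ i j : Fin 7, L i = true → L j = false → consecB i j = false) →
    ∀ i j, L i = L j := by decide

/-- Key combinatorial fact for `B` nodes. -/
lemma keyB : ∀ c L : Fin 7 → Bool,
    (∀ i j : Fin 7, consecB i j = true → c i ≠ c j) →
    (∀ i j : Fin 7, L i = true → L j = false → (decide (c i ≠ c j) = consecB i j)) →
    ∀ i j, L i = L j := by decide

/-- Key combinatorial fact for `O` nodes. -/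
lemma keyO : ∀ c L : Fin 7 → Bool,
    (∀ i j : Fin 7, consecB i j = true → c i ≠ c j) →
    (∀ i j : Fin 7, L i = true → L j = false → (((!(c i)) && c j) = consecB i j)) →
    ∀ i j, L i = L j := by decide

/-- If an induced `P7` of a composite sob lies entirely in one of the two parts,
we get an induced `P7` of the corresponding sub-sob. -/
lemma descend {a b : Sob} (s : Sob) (hsize : s.size = a.size + b.size)
    (hll : ∀ i j : ℕ, i < a.size → j < a.size → s.adj i j = a.adj i j)
    (hrr : ∀ i j : ℕ, ¬ i < a.size → ¬ j < a.size →
      s.adj i j = b.adj (i - a.size) (j - a.size))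
    (iha : ∀ v, ¬ IsP7 a v) (ihb : ∀ v, ¬ IsP7 b v)
    (v : Fin 7 → ℕ) (hv : IsP7 s v)
    (hside : ∀ i j : Fin 7, decide (v i < a.size) = decide (v j < a.size)) : False := by
  obtain ⟨hb, hinj, hadj⟩ := hv
  by_cases h0 : v 0 < a.size
  · have hall : ∀ i, v i < a.size := by
      intro i
      have h := hside i 0
      simp only [h0, decide_eq_true_eq, decide_eq_true_eq] at h
      simpa using h
    apply iha v
    refine ⟨hall, hinj, ?_⟩
    intro i j
    rw [← hll _ _ (hall i) (hall j), ← hll _ _ (hall j) (hall i)]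
    exact hadj i j
  · have hall : ∀ i, ¬ v i < a.size := by
      intro i
      have h := hside i 0
      simp only [h0, decide_eq_false_iff_not] at h
      simpa using h
    apply ihb (fun i => v i - a.size)
    refine ⟨?_, ?_, ?_⟩
    · intro i
      have h1 := hb i
      have h2 := hall i
      show v i - a.size < b.size
      omega
    · intro i j hij
      apply hinj
      have h1 := hall i
      have h2 := hall j
      simp only at hij
      omega
    · intro i j
      simp only
      rw [← hrr _ _ (hall i) (hall j), ← hrr _ _ (hall j) (hall i)]
      exact hadj i j

lemma no_IsP7 : ∀ (s : Sob) (v : Fin 7 → ℕ), ¬ IsP7 s v := by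
  intro s
  induction s with
  | leaf c =>
      rintro v ⟨hb, hinj, -⟩
      have h0 : v 0 < 1 := hb 0
      have h1 : v 1 < 1 := hb 1
      have h : (0 : Fin 7) = 1 := hinj (by omega)
      simp at h
  | U a b iha ihb =>
      intro v hv
      refine descend (a := a) (b := b) _ (by rfl) ?_ ?_ iha ihb v hv ?_
      · intro i j hi hj; simp [adj, hi, hj]
      · intro i j hi hj; simp [adj, hi, hj]
      · apply keyU (fun i => decide (v i < a.size))
        intro i j hi hj
        simp only [decide_eq_true_eq] at hi
        simp only [decide_eq_false_iff_not] at hj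
        by_contra hc
        rw [Bool.not_eq_false] at hc
        have h := (hv.2.2 i j).mpr hc
        have hF1 : (U a b).adj (v i) (v j) = false := by simp [adj, hi, hj]
        have hF2 : (U a b).adj (v j) (v i) = false := by simp [adj, hi, hj]
        simp [hF1, hF2] at h
  | B a b iha ihb =>
      intro v hv
      refine descend (a := a) (b := b) _ (by rfl) ?_ ?_ iha ihb v hv ?_
      · intro i j hi hj; simp [adj, hi, hj]
      · intro i j hi hj; simp [adj, hi, hj]
      · apply keyB (fun i => (B a b).color (v i)) (fun i => decide (v i < a.size))
          (isP7_alt hv)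
        intro i j hi hj
        simp only [decide_eq_true_eq] at hi
        simp only [decide_eq_false_iff_not] at hj
        have h := hv.2.2 i j
        have hE1 : (B a b).adj (v i) (v j) =
            decide (a.color (v i) ≠ b.color (v j - a.size)) := by simp [adj, hi, hj]
        have hE2 : (B a b).adj (v j) (v i) =
            decide (b.color (v j - a.size) ≠ a.color (v i)) := by simp [adj, hi, hj]
        rw [hE1, hE2] at h
        simp only [decide_eq_true_eq] at h
        have hci : (B a b).color (v i) = a.color (v i) := by simp [color, hi]
        have hcj : (B a b).color (v j) = b.color (v j - a.size) := by simp [color, hj]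
        simp only [hci, hcj]
        have hpq : (a.color (v i) ≠ b.color (v j - a.size)) ↔ consecB i j = true := by
          rw [← h]
          constructor
          · exact fun hp => Or.inl hp
          · rintro (hp | hp)
            exacts [hp, hp.symm]
        cases hcb : consecB i j with
        | false =>
            rw [hcb] at hpq
            simp only [Bool.false_eq_true, iff_false, not_not] at hpq
            simp [hpq]
        | true =>
            rw [hcb] at hpq
            simp only [iff_true] at hpq
            simp [hpq]
  | O a b iha ihb =>
      intro v hv
      refine descend (a := a) (b := b) _ (by rfl) ?_ ?_ iha ihb v hv ?_
      · intro i j hi hj; simp [adj, hi, hj]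
      · intro i j hi hj; simp [adj, hi, hj]
      · apply keyO (fun i => (O a b).color (v i)) (fun i => decide (v i < a.size))
          (isP7_alt hv)
        intro i j hi hj
        simp only [decide_eq_true_eq] at hi
        simp only [decide_eq_false_iff_not] at hj
        have h := hv.2.2 i j
        have hE1 : (O a b).adj (v i) (v j) =
            ((!a.color (v i)) && b.color (v j - a.size)) := by simp [adj, hi, hj]
        have hE2 : (O a b).adj (v j) (v i) =
            ((!a.color (v i)) && b.color (v j - a.size)) := by simp [adj, hi, hj]
        rw [hE1, hE2, or_self] at h
        have hci : (O a b).color (v i) = a.color (v i) := by simp [color, hi]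
        have hcj : (O a b).color (v j) = b.color (v j - a.size) := by simp [color, hj]
        simp only [hci, hcj]
        cases hcb : consecB i j with
        | false =>
            rw [hcb] at h
            simp only [Bool.false_eq_true, iff_false] at h
            simpa using h
        | true =>
            rw [hcb] at h
            simp only [iff_true] at h
            exact h

end Sob

/-- no sob contains an induced path on 7 vertices. -/
theorem sob_no_induced_P7 (s : Sob) :
    ¬ ∃ v : Fin 7 → Fin s.size, Function.Injective v ∧
      ∀ i j : Fin 7, s.graph.Adj (v i) (v j) ↔
        ((i : ℕ) + 1 = (j : ℕ) ∨ (j : ℕ) + 1 = (i : ℕ)) := by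
  rintro ⟨v, hinj, hadj⟩
  apply Sob.no_IsP7 s (fun i => (v i : ℕ))
  refine ⟨fun i => (v i).isLt, ?_, ?_⟩
  · intro i j h
    exact hinj (Fin.val_injective h)
  · intro i j
    simp only
    constructor
    · intro h
      have hne : v i ≠ v j := by
        intro he
        rw [he] at h
        rcases h with h | h <;> rw [Sob.adj_irrefl] at h <;> exact Bool.false_ne_true h
      have hcc := (hadj i j).mp ⟨hne, h⟩
      simpa [Sob.consecB] using hcc
    · intro hc
      have hc2 : (i : ℕ) + 1 = (j : ℕ) ∨ (j : ℕ) + 1 = (i : ℕ) := by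
        simpa [Sob.consecB] using hc
      exact ((hadj i j).mpr hc2).2
end
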